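/- Let (Ω, P) be a probability space, let ψ : Ω → ℝⁿ be a measurable random vector, let q ∈ ℝⁿ, let h > 0, let ε, ε₁, …, εₙ be nonnegative reals with ∑_{m=1}^{n} ε_m ≤ ε, and let K_B : ℝ → ℝ be a measurable function satisfying K_B(ν) ≥ 1_{[0,+∞)}(ν) for all ν ∈ ℝ, such that K_B((q_m − ψ_m)/h) is integrable for each m. If for every m ∈ {1, …, n} the deterministic constraint E[K_B((q_m − ψ_m)/h)] ≤ ε_m holds, then the joint chance constraint holds: P(ψ_m ≥ q_m for all m = 1, …, n) ≥ 1 − ε. -/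

import Mathlib

open MeasureTheory

/-- Biased-KDE transformation of a joint chance constraint: if `K_B` dominates the
indicator of `[0, ∞)`, the componentwise deterministic constraints
`E[K_B((q_m - ψ_m)/h)] ≤ ε_m` hold, and the risk budget satisfies `∑ ε_m ≤ ε`,
then the joint chance constraint `P(∀ m, ψ_m ≥ q_m) ≥ 1 - ε` holds. -/
theorem joint_chance_constraint_of_biasedKernel
    {Ω : Type*} [MeasurableSpace Ω] (P : Measure Ω) [IsProbabilityMeasure P]
    {n : ℕ} (ψ : Ω → Fin n → ℝ) (hψ : Measurable ψ)
    (q : Fin n → ℝ) (h : ℝ) (hh : 0 < h)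
    (ε : ℝ) (εm : Fin n → ℝ) (hε : 0 ≤ ε) (hεm : ∀ m, 0 ≤ εm m)
    (hsum : ∑ m, εm m ≤ ε)
    (K : ℝ → ℝ) (hK : Measurable K)
    (hdom : ∀ ν : ℝ, Set.indicator (Set.Ici (0 : ℝ)) (fun _ => (1 : ℝ)) ν ≤ K ν)
    (hint : ∀ m, Integrable (fun ω => K ((q m - ψ ω m) / h)) P)
    (hdet : ∀ m, (∫ ω, K ((q m - ψ ω m) / h) ∂P) ≤ εm m) :
    (P {ω | ∀ m, ψ ω m ≥ q m}).toReal ≥ 1 - ε := by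
  have hKnonneg : ∀ ν, 0 ≤ K ν := by
    intro ν
    refine le_trans ?_ (hdom ν)
    exact Set.indicator_nonneg (fun _ _ => zero_le_one) ν
  have hψm : ∀ m : Fin n, Measurable (fun ω => ψ ω m) :=
    fun m => (measurable_pi_apply m).comp hψ
  -- bad sets
  set S : Fin n → Set Ω := fun m => {ω | ψ ω m < q m} with hS
  have hSmeas : ∀ m, MeasurableSet (S m) := fun m =>
    measurableSet_lt (hψm m) measurable_const
  have hbad : ∀ m, (P (S m)).toReal ≤ εm m := by
    intro m
    have hfin : ∀ ω ∈ S m, (1 : ℝ) ≤ K ((q m - ψ ω m) / h) := by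
      intro ω hω
      have hpos : 0 ≤ (q m - ψ ω m) / h :=
        div_nonneg (by simp only [hS, Set.mem_setOf_eq] at hω; linarith) hh.le
      have := hdom ((q m - ψ ω m) / h)
      rwa [Set.indicator_of_mem (Set.mem_Ici.mpr hpos)] at this
    calc (P (S m)).toReal = ∫ ω in S m, (1 : ℝ) ∂P := by
          rw [setIntegral_const, smul_eq_mul, mul_one]; rfl
      _ ≤ ∫ ω in S m, K ((q m - ψ ω m) / h) ∂P := by
          refine setIntegral_mono_on (integrableOn_const ?_)
            ((hint m).integrableOn) (hSmeas m) hfin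
          exact measure_ne_top P _
      _ ≤ ∫ ω, K ((q m - ψ ω m) / h) ∂P :=
          setIntegral_le_integral (hint m)
            (Filter.Eventually.of_forall fun ω => hKnonneg _)
      _ ≤ εm m := hdet m
  -- complement
  have hAmeas : MeasurableSet {ω | ∀ m, ψ ω m ≥ q m} := by
    have : {ω | ∀ m, ψ ω m ≥ q m} = ⋂ m, {ω | q m ≤ ψ ω m} := by
      ext ω; simp [Set.mem_iInter, ge_iff_le]
    rw [this]
    exact MeasurableSet.iInter fun m => measurableSet_le measurable_const (hψm m)
  have hcompl : {ω | ∀ m, ψ ω m ≥ q m}ᶜ = ⋃ m, S m := by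
    ext ω
    simp only [Set.mem_compl_iff, Set.mem_setOf_eq, not_forall, not_le,
      Set.mem_iUnion, hS, ge_iff_le]
  have hunion : (P (⋃ m, S m)).toReal ≤ ε := by
    have h1 : P (⋃ m, S m) ≤ ∑ m, P (S m) := measure_iUnion_fintype_le P S
    have h2 : (P (⋃ m, S m)).toReal ≤ (∑ m, P (S m)).toReal := by
      refine ENNReal.toReal_mono ?_ h1
      exact ENNReal.sum_ne_top.2 fun m _ => measure_ne_top P _
    rw [ENNReal.toReal_sum (fun m _ => measure_ne_top P _)] at h2
    calc (P (⋃ m, S m)).toReal ≤ ∑ m, (P (S m)).toReal := h2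
      _ ≤ ∑ m, εm m := Finset.sum_le_sum fun m _ => hbad m
      _ ≤ ε := hsum
  have hsumPA : (P {ω | ∀ m, ψ ω m ≥ q m}).toReal
      + (P {ω | ∀ m, ψ ω m ≥ q m}ᶜ).toReal = 1 := by
    rw [← ENNReal.toReal_add (measure_ne_top P _) (measure_ne_top P _),
      measure_add_measure_compl hAmeas, measure_univ, ENNReal.toReal_one]
  rw [hcompl] at hsumPA
  linarith
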